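/- Let K ≥ 2, N ≥ 1, x : {1,…,N} → {1,…,K} with every category nonempty (I_k ≠ ∅ for all k), and let u = (u_1,…,u_N) ∈ Δ^N with all coordinates u_{n,ℓ} > 0. Then for every θ ∈ Δ, θ ∈ F(u) if and only if θ_ℓ ≤ η_{k→ℓ}(u) · θ_k for all k, ℓ ∈ {1,…,K}. -/
import Mathlib


noncomputable section

/-- The `ℓ`-th vertex of the probability simplex in `ℝ^K` (standard basis vector). -/
def vtx (K : ℕ) (ℓ : Fin K) : Fin K → ℝ := fun i => if i = ℓ then 1 else 0

/-- The subsimplex `Δ_k(θ)`: convex hull of `{θ} ∪ {V_ℓ : ℓ ≠ k}`. -/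
def subsimplex (K : ℕ) (k : Fin K) (θ : Fin K → ℝ) : Set (Fin K → ℝ) :=
  convexHull ℝ (insert θ {z | ∃ ℓ : Fin K, ℓ ≠ k ∧ z = vtx K ℓ})

lemma insert_eq_range (K : ℕ) (k : Fin K) (θ : Fin K → ℝ) :
    insert θ {z | ∃ ℓ : Fin K, ℓ ≠ k ∧ z = vtx K ℓ} =
      Set.range (fun ℓ : Fin K => if ℓ = k then θ else vtx K ℓ) := by
  ext z
  simp only [Set.mem_insert_iff, Set.mem_setOf_eq, Set.mem_range]
  constructor
  · rintro (rfl | ⟨ℓ, hℓ, rfl⟩)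
    · exact ⟨k, by simp⟩
    · exact ⟨ℓ, by simp [hℓ]⟩
  · rintro ⟨ℓ, rfl⟩
    by_cases h : ℓ = k
    · left; simp [h]
    · right; exact ⟨ℓ, h, by simp [h]⟩

lemma mem_sub {K : ℕ} {k : Fin K} {θ v : Fin K → ℝ}
    (hv : v ∈ subsimplex K k θ) :
    ∃ t : ℝ, 0 ≤ t ∧ v k = t * θ k ∧ ∀ ℓ, t * θ ℓ ≤ v ℓ := by
  rw [subsimplex, insert_eq_range, convexHull_range_eq_exists_affineCombination] at hv
  obtain ⟨s, w, hw0, hw1, haff⟩ := hv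
  set g : Fin K → (Fin K → ℝ) := fun ℓ => if ℓ = k then θ else vtx K ℓ with hg
  set w' : Fin K → ℝ := fun i => if i ∈ s then w i else 0 with hw'
  have hw'0 : ∀ i, 0 ≤ w' i := by
    intro i; by_cases h : i ∈ s <;> simp [hw', h, hw0 i]
  have hw'1 : ∑ i, w' i = 1 := by
    rw [hw']
    rw [Finset.sum_ite_mem, Finset.univ_inter, hw1]
  have hsum : ∑ i, w' i • g i = v := by
    rw [← haff, Finset.affineCombination_eq_linear_combination s g w hw1]
    simp only [hw', ite_smul, zero_smul]
    rw [Finset.sum_ite_mem, Finset.univ_inter]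
  refine ⟨w' k, hw'0 k, ?_, ?_⟩
  · have := congrFun hsum k
    rw [Finset.sum_apply] at this
    rw [← this]
    have hterm : ∀ i, (w' i • g i) k = if i = k then w' k * θ k else 0 := by
      intro i
      by_cases h : i = k
      · simp [h, hg]
      · simp [hg, h, vtx, Ne.symm h]
    rw [Finset.sum_congr rfl (fun i _ => hterm i)]
    simp
  · intro ℓ
    by_cases hℓ : ℓ = k
    · subst hℓ
      have := congrFun hsum ℓ
      rw [Finset.sum_apply] at this
      rw [← this]
      have hterm : ∀ i, (w' i • g i) ℓ = if i = ℓ then w' ℓ * θ ℓ else 0 := by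
        intro i
        by_cases h : i = ℓ
        · simp [h, hg]
        · simp [hg, h, vtx, Ne.symm h]
      rw [Finset.sum_congr rfl (fun i _ => hterm i)]
      simp
    · have := congrFun hsum ℓ
      rw [Finset.sum_apply] at this
      have heq : ∀ i, (w' i • g i) ℓ =
          (if i = k then w' k * θ ℓ else 0) + (if i = ℓ then w' ℓ else 0) := by
        intro i
        by_cases h : i = k
        · subst h
          simp [hg, Ne.symm hℓ]
        · by_cases h2 : i = ℓ
          · subst h2
            simp [hg, h, vtx]
          · simp [hg, h, h2, vtx, Ne.symm h2]
      rw [Finset.sum_congr rfl (fun i _ => heq i), Finset.sum_add_distrib] at this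
      simp only [Finset.sum_ite_eq', Finset.mem_univ, if_true] at this
      nlinarith [hw'0 ℓ]

lemma subMem {K : ℕ} {k : Fin K} {θ v : Fin K → ℝ}
    (hθ : θ ∈ stdSimplex ℝ (Fin K)) (hv : v ∈ stdSimplex ℝ (Fin K))
    (t : ℝ) (ht : 0 ≤ t) (hk : v k = t * θ k) (hle : ∀ ℓ, t * θ ℓ ≤ v ℓ) :
    v ∈ subsimplex K k θ := by
  rw [subsimplex]
  set g : Fin K → (Fin K → ℝ) := fun ℓ => if ℓ = k then θ else vtx K ℓ with hg
  set w : Fin K → ℝ := fun ℓ => if ℓ = k then t else v ℓ - t * θ ℓ with hw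
  have hw0 : ∀ i, 0 ≤ w i := by
    intro i
    by_cases h : i = k
    · simp [hw, h, ht]
    · simp only [hw, h, if_false]
      linarith [hle i]
  have hweq : ∀ ℓ, w ℓ = (v ℓ - t * θ ℓ) + (if ℓ = k then t else 0) := by
    intro ℓ
    by_cases h : ℓ = k
    · subst h; simp [hw, hk]
    · simp [hw, h]
  have hw1 : ∑ i, w i = 1 := by
    rw [Finset.sum_congr rfl (fun i _ => hweq i), Finset.sum_add_distrib]
    simp only [Finset.sum_ite_eq', Finset.mem_univ, if_true, Finset.sum_sub_distrib,
      ← Finset.mul_sum]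
    rw [hv.2, hθ.2]
    ring
  apply mem_convexHull_of_exists_fintype w g hw0 hw1
  · intro i
    by_cases h : i = k
    · simp [hg, h]
    · right
      exact ⟨i, h, by simp [hg, h]⟩
  · funext j
    rw [Finset.sum_apply]
    by_cases hj : j = k
    · subst hj
      have hterm : ∀ i, (w i • g i) j = if i = j then t * θ j else 0 := by
        intro i
        by_cases h : i = j
        · simp [h, hg, hw]
        · simp [hg, hw, h, vtx, Ne.symm h]
      rw [Finset.sum_congr rfl (fun i _ => hterm i)]
      simp [hk]
    · have hterm : ∀ i, (w i • g i) j =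
          (if i = k then t * θ j else 0) + (if i = j then v j - t * θ j else 0) := by
        intro i
        by_cases h : i = k
        · subst h
          simp [hg, hw, Ne.symm hj]
        · by_cases h2 : i = j
          · subst h2
            simp [hg, hw, h, vtx]
          · simp [hg, hw, h, h2, vtx, Ne.symm h2]
      rw [Finset.sum_congr rfl (fun i _ => hterm i), Finset.sum_add_distrib]
      simp only [Finset.sum_ite_eq', Finset.mem_univ, if_true]
      ring

theorem stmt10 (K N : ℕ) (hK : 2 ≤ K) (hN : 1 ≤ N)
    (x : Fin N → Fin K) (hx : ∀ k, ∃ n, x n = k)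
    (u : Fin N → Fin K → ℝ) (hu : ∀ n, u n ∈ stdSimplex ℝ (Fin K))
    (hupos : ∀ n ℓ, 0 < u n ℓ)
    (η : Fin K → Fin K → ℝ)
    (hη : ∀ k ℓ, IsLeast {v : ℝ | ∃ n, x n = k ∧ v = u n ℓ / u n k} (η k ℓ))
    (θ : Fin K → ℝ) (hθ : θ ∈ stdSimplex ℝ (Fin K)) :
    (∀ n, u n ∈ subsimplex K (x n) θ) ↔ ∀ k ℓ, θ ℓ ≤ η k ℓ * θ k := by
  constructor
  · intro h k ℓ
    obtain ⟨⟨m, hm, hval⟩, hlb⟩ := hη k ℓ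
    have hmem := h m
    rw [hm] at hmem
    obtain ⟨t, ht0, hkeq, hle⟩ := mem_sub hmem
    have hθk : 0 < θ k := by
      rcases lt_or_eq_of_le (hθ.1 k) with h' | h'
      · exact h'
      · exfalso
        have : u m k = 0 := by rw [hkeq, ← h']; ring
        exact absurd this (ne_of_gt (hupos m k))
    have humk : 0 < u m k := hupos m k
    have hmul : θ ℓ * u m k ≤ u m ℓ * θ k := by
      rw [hkeq]
      nlinarith [mul_le_mul_of_nonneg_right (hle ℓ) (hθ.1 k)]
    rw [hval, div_mul_eq_mul_div, le_div_iff₀ humk]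
    linarith [hmul]
  · intro h n
    have hθpos : ∀ k, 0 < θ k := by
      intro k
      rcases lt_or_eq_of_le (hθ.1 k) with h' | h'
      · exact h'
      · exfalso
        have hall : ∀ ℓ, θ ℓ = 0 := by
          intro ℓ
          have := h k ℓ
          rw [← h'] at this
          have h0 := hθ.1 ℓ
          nlinarith
        have := hθ.2
        rw [Finset.sum_congr rfl (fun i _ => hall i)] at this
        simp at this
    set k := x n
    have hθk := hθpos k
    refine subMem hθ (hu n) (u n k / θ k)
      (le_of_lt (div_pos (hupos n k) hθk)) (by field_simp) ?_
    intro ℓ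
    have hlb := (hη k ℓ).2 ⟨n, rfl, rfl⟩
    have h1 : θ ℓ ≤ η k ℓ * θ k := h k ℓ
    have h2 : η k ℓ * θ k ≤ (u n ℓ / u n k) * θ k :=
      mul_le_mul_of_nonneg_right hlb (le_of_lt hθk)
    have hunk := hupos n k
    rw [div_mul_eq_mul_div, div_le_iff₀ hθk]
    calc u n k * θ ℓ ≤ u n k * ((u n ℓ / u n k) * θ k) := by
          apply mul_le_mul_of_nonneg_left (le_trans h1 h2) (le_of_lt hunk)
      _ = u n ℓ * θ k := by field_simp
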